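/- Let M = {(1,1), (1,−1), (−1,1), (−1,−1), (2,2), (2,−2), (−2,2), (−2,−2)} ⊂ ℝ² and g = ((α/2)|·|₂² + δ_M)** for α > 0. Then the Fenchel conjugate is g*(q) = max{|q|₁ − α, 2|q|₁ − 4α} for all q ∈ ℝ²; i.e., g*(q) = |q|₁ − α if |q|₁ ≤ 3α and g*(q) = 2|q|₁ − 4α if |q|₁ ≥ 3α. -/

import Mathlib

open MeasureTheory Set Filter Topology

noncomputable section

abbrev Vec (k : ℕ) := EuclideanSpace ℝ (Fin k)

/-- The Fenchel (Legendre–Fenchel) conjugate of an extended-real-valued function on a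
real inner product space. -/
def EConj {X : Type*} [NormedAddCommGroup X] [InnerProductSpace ℝ X]
    (f : X → EReal) (p : X) : EReal :=
  ⨆ v, ((inner ℝ p v : ℝ) : EReal) - f v

/-- The convex subdifferential of an extended-real-valued function on a real inner
product space. -/
def ESubdiff {X : Type*} [NormedAddCommGroup X] [InnerProductSpace ℝ X]
    (f : X → EReal) (u : X) : Set X :=
  {p | ∀ v, f u + ((inner ℝ p (v - u) : ℝ) : EReal) ≤ f v}

/-- The vector `(a, b) ∈ ℝ²`. -/
def mk2 (a b : ℝ) : Vec 2 := WithLp.toLp 2 ![a, b]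

/-- The concentric-corners admissible set
`M = {(±1,±1), (±2,±2)} ⊂ ℝ²`. -/
def Mconc : Set (Vec 2) :=
  {mk2 1 1, mk2 1 (-1), mk2 (-1) 1, mk2 (-1) (-1),
   mk2 2 2, mk2 2 (-2), mk2 (-2) 2, mk2 (-2) (-2)}

open Classical in
/-- The multibang penalty `g = ((α/2)|·|₂² + δ_M)**` for the concentric-corners set. -/
def gConc (α : ℝ) : Vec 2 → EReal :=
  EConj (EConj (fun v => if v ∈ Mconc then ((α/2 * ‖v‖^2 : ℝ) : EReal) else ⊤))

/-!
Conjugation is antitone and `f** ≤ f` (Fenchel–Young), so `f*** = f*`; with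
`F = (α/2)|·|₂² + δ_M` this gives `g* = F*`, i.e. `g*(q) = max_{v ∈ M} (⟨q, v⟩ − (α/2)|v|₂²)`.
The points of `M` are those with `|v₀| = |v₁| = s` for `s ∈ {1, 2}`; for such `v` one has
`⟨q, v⟩ ≤ s|q|₁`, with equality when the signs of `v` match those of `q`, and `|v|₂² = 2s²`.
Hence `g*(q) = max_{s ∈ {1,2}} (s|q|₁ − αs²)`.
-/

open scoped RealInnerProductSpace

theorem EReal.coe_sub_le_comm {a : ℝ} {b c : EReal} (h : (a : EReal) - b ≤ c) :
    (a : EReal) - c ≤ b := by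
  induction b using EReal.rec <;> induction c using EReal.rec <;> simp_all [← EReal.coe_sub]
  linarith

section FenchelConjugate

variable {X : Type*} [NormedAddCommGroup X] [InnerProductSpace ℝ X]

theorem EConj_antitone {f g : X → EReal} (h : f ≤ g) : EConj g ≤ EConj f :=
  fun _ => iSup_mono fun v => EReal.sub_le_sub le_rfl (h v)

theorem EConj_EConj_le (f : X → EReal) : EConj (EConj f) ≤ f := fun v =>
  iSup_le fun p => by
    have fenchel_young : ((⟪p, v⟫ : ℝ) : EReal) - f v ≤ EConj f p := le_iSup_of_le v le_rfl
    rw [real_inner_comm]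
    exact EReal.coe_sub_le_comm fenchel_young

theorem EConj_EConj_EConj (f : X → EReal) : EConj (EConj (EConj f)) = EConj f :=
  le_antisymm (EConj_EConj_le (EConj f)) (EConj_antitone (EConj_EConj_le f))

theorem EConj_ite_top (M : Set X) [DecidablePred (· ∈ M)] (h : X → ℝ) (p : X) :
    EConj (fun v => if v ∈ M then (h v : EReal) else ⊤) p =
      ⨆ v ∈ M, ((⟪p, v⟫ - h v : ℝ) : EReal) :=
  iSup_congr fun v => by by_cases hv : v ∈ M <;> simp [hv]

end FenchelConjugate

theorem inner_eq_of_fin_two (q v : Vec 2) : ⟪q, v⟫ = q 0 * v 0 + q 1 * v 1 := by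
  simp [PiLp.inner_apply, Fin.sum_univ_two, mul_comm]

theorem norm_sq_eq_of_abs_eq {v : Vec 2} {s : ℝ} (h0 : |v 0| = s) (h1 : |v 1| = s) :
    ‖v‖ ^ 2 = 2 * s ^ 2 := by
  simp only [EuclideanSpace.norm_sq_eq, Fin.sum_univ_two, Real.norm_eq_abs]
  change |v 0| ^ 2 + |v 1| ^ 2 = _
  rw [h0, h1]; ring

theorem eq_mk2 (v : Vec 2) : v = mk2 (v 0) (v 1) := by
  ext i; fin_cases i <;> rfl

theorem mem_Mconc_iff {v : Vec 2} :
    v ∈ Mconc ↔ ∃ s ∈ ({1, 2} : Set ℝ), |v 0| = s ∧ |v 1| = s := by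
  constructor
  · intro hv
    simp only [Mconc, Set.mem_insert_iff, Set.mem_singleton_iff] at hv
    rcases hv with rfl | rfl | rfl | rfl | rfl | rfl | rfl | rfl <;> norm_num [mk2]
  · rintro ⟨s, hs, h0, h1⟩
    rw [eq_mk2 v]
    have hs0 : (0 : ℝ) ≤ s := by rcases hs with rfl | rfl <;> norm_num
    rcases (abs_eq hs0).1 h0 with h0 | h0 <;> rcases (abs_eq hs0).1 h1 with h1 | h1 <;>
      rcases hs with rfl | rfl <;> simp [Mconc, h0, h1]

theorem inner_sub_le_of_abs_eq (α : ℝ) (q : Vec 2) {v : Vec 2} {s : ℝ} (h0 : |v 0| = s)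
    (h1 : |v 1| = s) : ⟪q, v⟫ - α / 2 * ‖v‖ ^ 2 ≤ s * (|q 0| + |q 1|) - α * s ^ 2 := by
  have hq0 : q 0 * v 0 ≤ |q 0| * s := h0 ▸ abs_mul (q 0) (v 0) ▸ le_abs_self _
  have hq1 : q 1 * v 1 ≤ |q 1| * s := h1 ▸ abs_mul (q 1) (v 1) ▸ le_abs_self _
  rw [inner_eq_of_fin_two, norm_sq_eq_of_abs_eq h0 h1]
  linarith

theorem exists_abs_eq_mul_eq (x : ℝ) {s : ℝ} (hs : 0 ≤ s) :
    ∃ a, |a| = s ∧ x * a = s * |x| := by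
  rcases le_total 0 x with hx | hx
  · exact ⟨s, abs_of_nonneg hs, by rw [abs_of_nonneg hx, mul_comm]⟩
  · exact ⟨-s, by rw [abs_neg, abs_of_nonneg hs], by rw [abs_of_nonpos hx]; ring⟩

theorem exists_abs_eq_inner_sub_eq (α : ℝ) (q : Vec 2) {s : ℝ} (hs : 0 ≤ s) :
    ∃ v : Vec 2, |v 0| = s ∧ |v 1| = s ∧
      ⟪q, v⟫ - α / 2 * ‖v‖ ^ 2 = s * (|q 0| + |q 1|) - α * s ^ 2 := by
  obtain ⟨a, ha, hqa⟩ := exists_abs_eq_mul_eq (q 0) hs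
  obtain ⟨b, hb, hqb⟩ := exists_abs_eq_mul_eq (q 1) hs
  refine ⟨mk2 a b, ha, hb, ?_⟩
  rw [inner_eq_of_fin_two, norm_sq_eq_of_abs_eq (v := mk2 a b) ha hb]
  change q 0 * a + q 1 * b - _ = _
  rw [hqa, hqb]; ring

open Classical in
theorem EConj_Mconc_penalty_eq_iSup (α : ℝ) (q : Vec 2) :
    EConj (fun v => if v ∈ Mconc then ((α / 2 * ‖v‖ ^ 2 : ℝ) : EReal) else ⊤) q =
      ⨆ s ∈ ({1, 2} : Set ℝ), ((s * (|q 0| + |q 1|) - α * s ^ 2 : ℝ) : EReal) := by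
  rw [EConj_ite_top]
  refine le_antisymm (iSup₂_le fun v hv => ?_) (iSup₂_le fun s hs => ?_)
  · obtain ⟨s, hs, h0, h1⟩ := mem_Mconc_iff.1 hv
    exact le_iSup₂_of_le s hs (EReal.coe_le_coe_iff.2 (inner_sub_le_of_abs_eq α q h0 h1))
  · have hs0 : (0 : ℝ) ≤ s := by rcases hs with rfl | rfl <;> norm_num
    obtain ⟨v, h0, h1, hv⟩ := exists_abs_eq_inner_sub_eq α q hs0
    exact le_iSup₂_of_le v (mem_Mconc_iff.2 ⟨s, hs, h0, h1⟩) (by rw [hv])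

theorem fenchel_conjugate_concentric_general (α : ℝ) :
    ∀ q : Vec 2,
      (EConj (gConc α) q =
        ((max (|q 0| + |q 1| - α) (2*(|q 0| + |q 1|) - 4*α) : ℝ) : EReal))
      ∧ (|q 0| + |q 1| ≤ 3*α →
          EConj (gConc α) q = ((|q 0| + |q 1| - α : ℝ) : EReal))
      ∧ (3*α ≤ |q 0| + |q 1| →
          EConj (gConc α) q = ((2*(|q 0| + |q 1|) - 4*α : ℝ) : EReal)) := by
  intro q
  have hmax : EConj (gConc α) q =
      ((max (|q 0| + |q 1| - α) (2*(|q 0| + |q 1|) - 4*α) : ℝ) : EReal) := by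
    rw [gConc, EConj_EConj_EConj, EConj_Mconc_penalty_eq_iSup, iSup_insert, iSup_singleton,
      EReal.coe_strictMono.monotone.map_max]
    congr 2 <;> ring
  refine ⟨hmax, fun h => ?_, fun h => ?_⟩
  · rw [hmax, max_eq_left (by linarith)]
  · rw [hmax, max_eq_right (by linarith)]

/-- Fenchel conjugate for concentric corners: for
`M = {(±1,±1), (±2,±2)}` and `g = ((α/2)|·|₂² + δ_M)**`, the Fenchel conjugate is
`g*(q) = max{|q|₁ − α, 2|q|₁ − 4α}`, i.e. `|q|₁ − α` for `|q|₁ ≤ 3α` and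
`2|q|₁ − 4α` for `|q|₁ ≥ 3α`. -/
theorem fenchel_conjugate_concentric (α : ℝ) (hα : 0 < α) :
    ∀ q : Vec 2,
      (EConj (gConc α) q =
        ((max (|q 0| + |q 1| - α) (2*(|q 0| + |q 1|) - 4*α) : ℝ) : EReal))
      ∧ (|q 0| + |q 1| ≤ 3*α →
          EConj (gConc α) q = ((|q 0| + |q 1| - α : ℝ) : EReal))
      ∧ (3*α ≤ |q 0| + |q 1| →
          EConj (gConc α) q = ((2*(|q 0| + |q 1|) - 4*α : ℝ) : EReal)) :=
  fenchel_conjugate_concentric_general α
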